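/- The function F_4^*(t,r) = 1/(5r^2 + 3(T-t)^2)^3 solves the linearized equation (∂_t^2 - ∂_r^2 - (6/r)∂_r)u(t,r) = 2 u_T^*(t,r) u(t,r) for all (t,r) ≠ (T,0), r > 0. -/

import Mathlib

/-!
Both second derivatives come from one formula: if `q''` is the derivative of `q'` then
`(1 / q ^ n)'' = (n (n + 1) q'² - n q'' q) / q ^ (n + 2)`. With `q = 5r² + 3τ²`, `τ = T - t`,
applied in `t` (`q' = -6τ`, `q'' = 6`) and in `r` (`q' = 10r`, `q'' = 10`), the equation
multiplied by `q⁵` becomes `432τ² - 1200r² + 192q = 48(21τ² - 5r²)`, which holds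
identically.
-/

open Filter Topology

theorem hasDerivAt_one_div_pow {q : ℝ → ℝ} {q' x : ℝ} (n : ℕ) (hq : HasDerivAt q q' x)
    (hx : q x ≠ 0) : HasDerivAt (fun y => 1 / q y ^ n) (-(n * q') / q x ^ (n + 1)) x := by
  rcases n with _ | n
  · simpa using hasDerivAt_const x (1 : ℝ)
  simp only [one_div]
  refine ((hq.pow (n + 1)).inv (pow_ne_zero _ hx)).congr_deriv ?_
  simp only [Pi.pow_apply, Nat.add_sub_cancel]
  field_simp
  ring

theorem deriv_deriv_one_div_pow {q q' : ℝ → ℝ} {q'' x : ℝ} (n : ℕ)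
    (hq : ∀ y, HasDerivAt q (q' y) y) (hq' : HasDerivAt q' q'' x) (hx : q x ≠ 0) :
    deriv (deriv fun y => 1 / q y ^ n) x
      = (n * (n + 1) * q' x ^ 2 - n * q'' * q x) / q x ^ (n + 2) := by
  have hfirst : deriv (fun y => 1 / q y ^ n) =ᶠ[𝓝 x] fun y => -(n * q' y) / q y ^ (n + 1) := by
    filter_upwards [(hq x).continuousAt.eventually_ne hx] with y hy
    exact (hasDerivAt_one_div_pow n (hq y) hy).deriv
  rw [hfirst.deriv_eq]
  refine (((hq'.const_mul (n : ℝ)).neg).div ((hq x).pow (n + 1))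
    (pow_ne_zero _ hx)).deriv.trans ?_
  simp only [Pi.pow_apply, Pi.neg_apply, Nat.add_sub_cancel]
  field_simp
  push_cast
  ring

theorem F4star_solves_linearized (T : ℝ) (uStar F : ℝ → ℝ → ℝ)
    (huStar : ∀ t r : ℝ, uStar t r = 24 * (21 * (T - t) ^ 2 - 5 * r ^ 2) /
      (3 * (T - t) ^ 2 + 5 * r ^ 2) ^ 2)
    (hF : ∀ t r : ℝ, F t r = 1 / (5 * r ^ 2 + 3 * (T - t) ^ 2) ^ 3) :
    ∀ t r : ℝ, 0 < r → (t, r) ≠ (T, 0) →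
      deriv (deriv (fun t' => F t' r)) t - deriv (deriv (fun r' => F t r')) r
        - (6 / r) * deriv (fun r' => F t r') r = 2 * uStar t r * F t r := by
  intro t r hr _
  have hQ : 5 * r ^ 2 + 3 * (T - t) ^ 2 ≠ 0 := by positivity
  have hq_time : ∀ s, HasDerivAt (fun s => 5 * r ^ 2 + 3 * (T - s) ^ 2) (-6 * (T - s)) s := by
    intro s
    refine (((((hasDerivAt_id' s).const_sub T).pow 2).const_mul 3).const_add _).congr_deriv ?_
    ring
  have hq'_time : HasDerivAt (fun s => -6 * (T - s)) 6 t := by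
    simpa using ((hasDerivAt_id t).const_sub T).const_mul (-6)
  have hq_rad : ∀ s, HasDerivAt (fun s => 5 * s ^ 2 + 3 * (T - t) ^ 2) (10 * s) s := by
    intro s
    refine (((hasDerivAt_pow 2 s).const_mul 5).add_const _).congr_deriv ?_
    ring
  have hq'_rad : HasDerivAt (fun s => 10 * s) 10 r := by
    simpa using (hasDerivAt_id r).const_mul 10
  have hF_time : (fun t' => F t' r) = fun s => 1 / (5 * r ^ 2 + 3 * (T - s) ^ 2) ^ 3 :=
    funext fun s => hF s r
  have hF_rad : (fun r' => F t r') = fun s => 1 / (5 * s ^ 2 + 3 * (T - t) ^ 2) ^ 3 :=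
    funext (hF t)
  rw [hF_time, hF_rad, deriv_deriv_one_div_pow 3 hq_time hq'_time hQ,
    deriv_deriv_one_div_pow 3 hq_rad hq'_rad hQ, (hasDerivAt_one_div_pow 3 (hq_rad r) hQ).deriv,
    huStar, hF]
  field_simp
  ring
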